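/- Let Σ = (G, σ) be a signed graph with connected underlying simple graph G, and let w be a positive real-valued weight function on the edges of G. Let A(Σ,w) be the adjacency matrix with (u,v) entry σ(uv)·w(uv) for each edge uv and 0 otherwise, and A(G,w) the matrix with (u,v) entry w(uv) for edges and 0 otherwise. Then A(Σ,w) and A(G,w) are cospectral (have equal characteristic polynomials) if and only if Σ is balanced. -/

import Mathlib

open SimpleGraph

/-- The sign (product of edge signs) of a walk in a graph, computed along its darts. -/
def walkSign {V : Type*} {G : SimpleGraph V} (σ : V → V → ℤ) {u v : V} (p : G.Walk u v) : ℤ :=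
  (p.darts.map fun d => σ d.toProd.1 d.toProd.2).prod

/-- `σ` is a signature on `G`: a symmetric function that is `±1`-valued on edges. -/
def IsSignature {V : Type*} (G : SimpleGraph V) (σ : V → V → ℤ) : Prop :=
  (∀ u v, σ u v = σ v u) ∧ ∀ u v, G.Adj u v → σ u v = 1 ∨ σ u v = -1

/-- A signed graph is balanced when every cycle has sign `+1`. -/
def IsBalanced {V : Type*} (G : SimpleGraph V) (σ : V → V → ℤ) : Prop :=
  ∀ (u : V) (p : G.Walk u u), p.IsCycle → walkSign σ p = 1

/-- A walk is a shortest path when it is a path whose length is the graph distance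
between its endpoints. -/
def IsShortestPath {V : Type*} {G : SimpleGraph V} {u v : V} (p : G.Walk u v) : Prop :=
  p.IsPath ∧ p.length = G.dist u v

open scoped Classical in
/-- `σmax u v = +1` if some shortest `u v`-path is positive, `-1` otherwise. -/
noncomputable def sigmaMax {V : Type*} (G : SimpleGraph V) (σ : V → V → ℤ) (u v : V) : ℤ :=
  if ∃ p : G.Walk u v, IsShortestPath p ∧ walkSign σ p = 1 then 1 else -1

open scoped Classical in
/-- `σmin u v = +1` if all shortest `u v`-paths are positive, `-1` otherwise. -/
noncomputable def sigmaMin {V : Type*} (G : SimpleGraph V) (σ : V → V → ℤ) (u v : V) : ℤ :=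
  if ∀ p : G.Walk u v, IsShortestPath p → walkSign σ p = 1 then 1 else -1

/-- The signed distance matrix `D^max`, with `(u,v)` entry `σmax(u,v)·d(u,v)`. -/
noncomputable def Dmax {V : Type*} (G : SimpleGraph V) (σ : V → V → ℤ) : Matrix V V ℝ :=
  Matrix.of fun u v => (sigmaMax G σ u v : ℝ) * (G.dist u v : ℝ)

/-- The signed distance matrix `D^min`, with `(u,v)` entry `σmin(u,v)·d(u,v)`. -/
noncomputable def Dmin {V : Type*} (G : SimpleGraph V) (σ : V → V → ℤ) : Matrix V V ℝ :=
  Matrix.of fun u v => (sigmaMin G σ u v : ℝ) * (G.dist u v : ℝ)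

/-- Two vertices are distance-compatible if all shortest paths between them have the
same sign. -/
def Compatible {V : Type*} (G : SimpleGraph V) (σ : V → V → ℤ) (u v : V) : Prop :=
  ∀ p q : G.Walk u v, IsShortestPath p → IsShortestPath q → walkSign σ p = walkSign σ q

/-- A signed graph is distance-compatible if every pair of vertices is
distance-compatible. -/
def IsCompatibleGraph {V : Type*} (G : SimpleGraph V) (σ : V → V → ℤ) : Prop :=
  ∀ u v, Compatible G σ u v

/-- The largest eigenvalue of a (symmetric) real matrix: the supremum of the set of real
roots of its characteristic polynomial. -/
noncomputable def largestEigenvalue {n : Type*} [Fintype n] [DecidableEq n]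
    (M : Matrix n n ℝ) : ℝ :=
  sSup {x : ℝ | M.charpoly.IsRoot x}

/-! If `Σ` is balanced, every closed walk is positive: reducing a walk to a path (`Walk.bypass`)
only removes cycles and back-and-forth edges. With `G` connected, the signs `θ v` of walks from a
fixed root then satisfy `σ(uv) = θ(u) θ(v)` on edges, so `A(Σ,w) = D A(G,w) D` with `D = diag θ`
and `D² = 1`.

Conversely, both matrices are symmetric, so equal characteristic polynomials give equal traces of
all powers. The trace of the `k`-th power is a sum over closed walks of length `k` of the products
of entries along the walk, and the term of a walk for `A(Σ,w)` is its sign times its positive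
term for `A(G,w)`. A negative cycle of length `k` therefore makes `tr A(Σ,w)^k < tr A(G,w)^k`. -/

namespace SimpleGraph.Walk

variable {V R : Type*} {G : SimpleGraph V}

def dartProd [Monoid R] (f : V → V → R) {u v : V} (p : G.Walk u v) : R :=
  (p.darts.map fun d => f d.fst d.snd).prod

@[simp]
lemma dartProd_nil [Monoid R] (f : V → V → R) (u : V) :
    (nil : G.Walk u u).dartProd f = 1 := rfl

@[simp]
lemma dartProd_cons [Monoid R] (f : V → V → R) {u v w : V} (h : G.Adj u v) (p : G.Walk v w) :
    (cons h p).dartProd f = f u v * p.dartProd f := by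
  simp [dartProd]

lemma dartProd_append [Monoid R] (f : V → V → R) {u v w : V} (p : G.Walk u v)
    (q : G.Walk v w) : (p.append q).dartProd f = p.dartProd f * q.dartProd f := by
  simp [dartProd]

lemma dartProd_reverse [CommMonoid R] {f : V → V → R} (hf : ∀ a b, f a b = f b a) {u v : V}
    (p : G.Walk u v) : p.reverse.dartProd f = p.dartProd f := by
  induction p with
  | nil => rfl
  | cons h p ih => simp [dartProd_append, ih, hf, mul_comm]

lemma dartProd_pos [CommSemiring R] [PartialOrder R] [IsStrictOrderedRing R]
    {f : V → V → R} (hf : ∀ a b, G.Adj a b → 0 < f a b) {u v : V} (p : G.Walk u v) :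
    0 < p.dartProd f := by
  induction p with
  | nil => simp
  | cons h p ih => simpa using mul_pos (hf _ _ h) ih

end SimpleGraph.Walk

open SimpleGraph Walk

section Signs

variable {V : Type*} {G : SimpleGraph V} {σ : V → V → ℤ}

@[simp]
lemma walkSign_nil (u : V) : walkSign σ (nil : G.Walk u u) = 1 := rfl

@[simp]
lemma walkSign_cons {u v w : V} (h : G.Adj u v) (p : G.Walk v w) :
    walkSign σ (cons h p) = σ u v * walkSign σ p :=
  dartProd_cons σ h p

lemma walkSign_append {u v w : V} (p : G.Walk u v) (q : G.Walk v w) :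
    walkSign σ (p.append q) = walkSign σ p * walkSign σ q :=
  dartProd_append σ p q

lemma walkSign_reverse (hσ : IsSignature G σ) {u v : V} (p : G.Walk u v) :
    walkSign σ p.reverse = walkSign σ p :=
  dartProd_reverse hσ.1 p

lemma walkSign_eq_one_or_eq_neg_one (hσ : IsSignature G σ) {u v : V} (p : G.Walk u v) :
    walkSign σ p = 1 ∨ walkSign σ p = -1 := by
  induction p with
  | nil => left; rfl
  | cons h p ih =>
    rw [walkSign_cons]
    rcases hσ.2 _ _ h with h1 | h1 <;> rcases ih with h2 | h2 <;> simp [h1, h2]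

lemma walkSign_mul_self (hσ : IsSignature G σ) {u v : V} (p : G.Walk u v) :
    walkSign σ p * walkSign σ p = 1 := by
  rcases walkSign_eq_one_or_eq_neg_one hσ p with h | h <;> simp [h]

namespace IsBalanced

variable (hσ : IsSignature G σ) (hb : IsBalanced G σ)
include hσ hb

lemma mul_walkSign_of_isPath {u v : V} (h : G.Adj u v) {q : G.Walk v u} (hq : q.IsPath) :
    σ u v * walkSign σ q = 1 := by
  by_cases he : s(v, u) ∈ q.edges
  · rw [hq.eq_adj_toWalk_of_mem_edges he]
    simpa [hσ.1 v u] using walkSign_mul_self hσ (cons h nil : G.Walk u v)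
  · simpa using
      hb u (cons h q) ((cons_isCycle_iff q h).mpr ⟨hq, by rwa [Sym2.eq_swap]⟩)

lemma walkSign_bypass [DecidableEq V] {u v : V} (p : G.Walk u v) :
    walkSign σ p.bypass = walkSign σ p := by
  induction p with
  | nil => rfl
  | @cons u v w h p ih =>
    dsimp only [bypass]
    split_ifs with hs
    · have hsplit := congrArg (walkSign σ) (p.bypass.take_spec hs)
      rw [walkSign_append, ih] at hsplit
      rw [walkSign_cons, ← hsplit, ← mul_assoc,
        mul_walkSign_of_isPath hσ hb h ((bypass_isPath p).takeUntil hs), one_mul]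
    · rw [walkSign_cons, walkSign_cons, ih]

lemma walkSign_eq_one {u : V} (p : G.Walk u u) : walkSign σ p = 1 := by
  classical
  rw [← walkSign_bypass hσ hb, (isPath_iff_nil.mp (bypass_isPath p)).eq_nil]
  rfl

lemma exists_switching (hG : G.Connected) :
    ∃ θ : V → ℤ, (∀ v, θ v * θ v = 1) ∧ ∀ a b, G.Adj a b → σ a b = θ a * θ b := by
  obtain ⟨r⟩ := hG.nonempty
  let θ v := walkSign σ (hG.preconnected r v).some
  have hθ (v : V) : θ v * θ v = 1 := walkSign_mul_self hσ _
  refine ⟨θ, hθ, fun a b hab => ?_⟩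
  have hcycle : σ a b * (θ b * θ a) = 1 := by
    have := walkSign_eq_one hσ hb
      (cons hab ((hG.preconnected r b).some.reverse.append (hG.preconnected r a).some))
    rwa [walkSign_cons, walkSign_append, walkSign_reverse hσ] at this
  linear_combination (θ a * θ b) * hcycle - σ a b * θ a * θ a * hθ b - σ a b * hθ a

end IsBalanced

end Signs

namespace Matrix

lemma charpoly_mul_mul_of_mul_eq_one {n R : Type*} [Fintype n] [DecidableEq n] [CommRing R]
    {P Q : Matrix n n R} (h : Q * P = 1) (A : Matrix n n R) :
    (P * A * Q).charpoly = A.charpoly := by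
  rw [charpoly_mul_comm, ← mul_assoc, h, one_mul]

namespace IsHermitian

variable {𝕜 n : Type*} [RCLike 𝕜] [Fintype n] [DecidableEq n] {A B : Matrix n n 𝕜}

lemma trace_pow_eq_sum_eigenvalues_pow (hA : A.IsHermitian) (k : ℕ) :
    (A ^ k).trace = ∑ i, (hA.eigenvalues i : 𝕜) ^ k := by
  conv_lhs => rw [hA.spectral_theorem, ← map_pow, Unitary.conjStarAlgAut_apply, trace_mul_cycle,
    Unitary.coe_star_mul_self, one_mul, diagonal_pow, trace_diagonal]
  rfl

lemma trace_pow_eq_of_charpoly_eq (hA : A.IsHermitian) (hB : B.IsHermitian)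
    (h : A.charpoly = B.charpoly) (k : ℕ) : (A ^ k).trace = (B ^ k).trace := by
  rw [hA.trace_pow_eq_sum_eigenvalues_pow, hB.trace_pow_eq_sum_eigenvalues_pow,
    (eigenvalues_eq_eigenvalues_iff hA hB).mpr h]

end IsHermitian

end Matrix

open Matrix

namespace SimpleGraph

variable {V R : Type*} (G : SimpleGraph V) [DecidableRel G.Adj]

def weightedAdjMatrix [Zero R] (w : V → V → R) : Matrix V V R :=
  Matrix.of fun u v => if G.Adj u v then w u v else 0

variable {G}

lemma weightedAdjMatrix_congr [Zero R] {w w' : V → V → R}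
    (h : ∀ a b, G.Adj a b → w a b = w' a b) :
    G.weightedAdjMatrix w = G.weightedAdjMatrix w' := by
  ext a b
  by_cases hab : G.Adj a b <;> simp [weightedAdjMatrix, hab, h]

lemma isHermitian_weightedAdjMatrix {w : V → V → ℝ} (hw : ∀ a b, w a b = w b a) :
    (G.weightedAdjMatrix w).IsHermitian := by
  ext a b
  simp [weightedAdjMatrix, G.adj_comm, hw]

variable [Fintype V] [DecidableEq V]

lemma weightedAdjMatrix_pow_apply [CommSemiring R] (w : V → V → R) (n : ℕ) (u v : V) :
    (G.weightedAdjMatrix w ^ n) u v = ∑ p ∈ G.finsetWalkLength n u v, p.dartProd w := by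
  induction n generalizing u with
  | zero => obtain rfl | h := eq_or_ne u v <;> simp [finsetWalkLength, one_apply, *]
  | succ n ih =>
    rw [pow_succ', mul_apply]
    simp only [ih]
    simp only [weightedAdjMatrix, of_apply, ite_mul, zero_mul, Finset.sum_ite,
      Finset.sum_const_zero, add_zero]
    rw [finsetWalkLength, Finset.sum_biUnion]
    · rw [Finset.sum_subtype (p := (· ∈ G.neighborSet u)) _ (by simp)]
      simp only [Finset.sum_map, Finset.mul_sum]
      rfl
    · rintro ⟨x, hx⟩ - ⟨y, hy⟩ - hxy
      rw [Function.onFun, Finset.disjoint_left]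
      rintro _ hp hq
      simp only [Finset.mem_map] at hp hq
      obtain ⟨p, -, rfl⟩ := hp
      obtain ⟨q, -, hq⟩ := hq
      cases hq
      simp at hxy

lemma trace_weightedAdjMatrix_pow [CommSemiring R] (w : V → V → R) (n : ℕ) :
    (G.weightedAdjMatrix w ^ n).trace = ∑ u, ∑ p ∈ G.finsetWalkLength n u u, p.dartProd w := by
  simp only [trace, diag_apply, weightedAdjMatrix_pow_apply]

lemma charpoly_weightedAdjMatrix_switch [CommRing R] {θ : V → R} (hθ : ∀ v, θ v * θ v = 1)
    (w : V → V → R) :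
    (G.weightedAdjMatrix fun a b => θ a * θ b * w a b).charpoly =
      (G.weightedAdjMatrix w).charpoly := by
  have hconj : G.weightedAdjMatrix (fun a b => θ a * θ b * w a b) =
      diagonal θ * G.weightedAdjMatrix w * diagonal θ := by
    ext a b
    by_cases hab : G.Adj a b <;> simp [weightedAdjMatrix, hab, diagonal_mul, mul_diagonal]
    ring
  rw [hconj, charpoly_mul_mul_of_mul_eq_one
    (by rw [diagonal_mul_diagonal, funext hθ, diagonal_one])]

end SimpleGraph

section SignedWeights

variable {V : Type*} {G : SimpleGraph V} {σ : V → V → ℤ}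

lemma dartProd_sign_mul {R : Type*} [CommRing R] (w : V → V → R) {u v : V} (p : G.Walk u v) :
    p.dartProd (fun a b => (σ a b : R) * w a b) = walkSign σ p * p.dartProd w := by
  induction p with
  | nil => simp
  | cons h p ih =>
    rw [dartProd_cons, dartProd_cons, ih, walkSign_cons]
    push_cast
    ring

lemma dartProd_sign_mul_lt (hσ : IsSignature G σ) {w : V → V → ℝ}
    (hw : ∀ a b, G.Adj a b → 0 < w a b) {u v : V} {p : G.Walk u v} (hp : walkSign σ p ≠ 1) :
    p.dartProd (fun a b => (σ a b : ℝ) * w a b) < p.dartProd w := by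
  have hpos := dartProd_pos hw p
  simp [dartProd_sign_mul, (walkSign_eq_one_or_eq_neg_one hσ p).resolve_left hp]
  linarith

lemma dartProd_sign_mul_le (hσ : IsSignature G σ) {w : V → V → ℝ}
    (hw : ∀ a b, G.Adj a b → 0 < w a b) {u v : V} (p : G.Walk u v) :
    p.dartProd (fun a b => (σ a b : ℝ) * w a b) ≤ p.dartProd w := by
  by_cases hp : walkSign σ p = 1
  · simp [dartProd_sign_mul, hp]
  · exact (dartProd_sign_mul_lt hσ hw hp).le

variable [Fintype V] [DecidableEq V] [DecidableRel G.Adj]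

lemma trace_weightedAdjMatrix_sign_pow_lt (hσ : IsSignature G σ) {w : V → V → ℝ}
    (hw : ∀ a b, G.Adj a b → 0 < w a b) {u : V} {c : G.Walk u u} (hc : walkSign σ c ≠ 1) :
    (G.weightedAdjMatrix (fun a b => (σ a b : ℝ) * w a b) ^ c.length).trace <
      (G.weightedAdjMatrix w ^ c.length).trace := by
  rw [trace_weightedAdjMatrix_pow, trace_weightedAdjMatrix_pow]
  refine Finset.sum_lt_sum (fun x _ => Finset.sum_le_sum fun p _ => dartProd_sign_mul_le hσ hw p)
    ⟨u, Finset.mem_univ u, Finset.sum_lt_sum (fun p _ => dartProd_sign_mul_le hσ hw p)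
      ⟨c, mem_finsetWalkLength_iff.mpr rfl, dartProd_sign_mul_lt hσ hw hc⟩⟩

end SignedWeights

/-- Acharya's theorem, weighted form. For a signed graph `(G, σ)` with
connected underlying simple graph and a positive edge-weight function `w`, the weighted
signed adjacency matrix `A(Σ,w)` is cospectral with the weighted adjacency matrix
`A(G,w)` if and only if the signed graph is balanced. -/
theorem weighted_cospectral_iff_balanced {V : Type*} [Fintype V] [DecidableEq V]
    (G : SimpleGraph V) [DecidableRel G.Adj] (σ : V → V → ℤ) (w : V → V → ℝ)
    (hσ : IsSignature G σ) (hG : G.Connected)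
    (hwsym : ∀ u v, w u v = w v u) (hwpos : ∀ u v, G.Adj u v → 0 < w u v) :
    (Matrix.of fun u v => if G.Adj u v then (σ u v : ℝ) * w u v else 0).charpoly =
      (Matrix.of fun u v => if G.Adj u v then w u v else 0).charpoly ↔
    IsBalanced G σ := by
  change (G.weightedAdjMatrix fun u v => (σ u v : ℝ) * w u v).charpoly =
    (G.weightedAdjMatrix w).charpoly ↔ _
  constructor
  · intro hchar u c _
    by_contra hc
    have hsym (a b : V) : (σ a b : ℝ) * w a b = σ b a * w b a := by rw [hσ.1, hwsym]
    exact (trace_weightedAdjMatrix_sign_pow_lt hσ hwpos hc).ne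
      ((isHermitian_weightedAdjMatrix hsym).trace_pow_eq_of_charpoly_eq
        (isHermitian_weightedAdjMatrix hwsym) hchar _)
  · intro hb
    obtain ⟨θ, hθ, hσθ⟩ := hb.exists_switching hσ hG
    rw [← charpoly_weightedAdjMatrix_switch (θ := fun v => (θ v : ℝ)) (by exact_mod_cast hθ) w]
    exact congrArg _ (weightedAdjMatrix_congr fun a b hab => by rw [hσθ a b hab]; push_cast; ring)
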